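/- Let Σ be a connected graph with at least one 2-arc (i.e., Σ ≠ K_2), and G ≤ Aut(Σ). If the subdivision graph S(Σ) is locally (G,2)-distance transitive, then Σ is (G,2)-arc transitive. -/

import Mathlib

open SimpleGraph

/-- The subdivision graph of a simple graph `S`: vertex set `V ⊕ E(S)`,
with `x ∈ V` adjacent to `e ∈ E(S)` iff `x ∈ e`. -/
def subdiv {V : Type*} (S : SimpleGraph V) : SimpleGraph (V ⊕ S.edgeSet) where
  Adj a b :=
    (∃ (x : V) (e : S.edgeSet), a = Sum.inl x ∧ b = Sum.inr e ∧ x ∈ (e : Sym2 V)) ∨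
    (∃ (x : V) (e : S.edgeSet), b = Sum.inl x ∧ a = Sum.inr e ∧ x ∈ (e : Sym2 V))
  symm := ⟨fun a b (h : _ ∨ _) => h.elim (fun ⟨x, e, h1, h2, h3⟩ => Or.inr ⟨x, e, h1, h2, h3⟩)
    (fun ⟨x, e, h1, h2, h3⟩ => Or.inl ⟨x, e, h1, h2, h3⟩)⟩
  loopless := ⟨by
    rintro a (⟨x, e, h1, h2, _⟩ | ⟨x, e, h1, h2, _⟩) <;> rw [h1] at h2 <;>
      cases h2⟩

/-- `G` acts on `V` by automorphisms of the graph `S`. -/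
def IsGraphAction {V : Type*} (S : SimpleGraph V) (G : Type*) [Group G] [MulAction G V] : Prop :=
  ∀ (g : G) (u v : V), S.Adj (g • u) (g • v) ↔ S.Adj u v

/-- The induced action of `g` on the edge set of `S`. -/
def emap {V : Type*} {S : SimpleGraph V} {G : Type*} [Group G] [MulAction G V]
    (hA : IsGraphAction S G) (g : G) (e : S.edgeSet) : S.edgeSet :=
  ⟨Sym2.map (g • ·) e.1, by
    obtain ⟨e, he⟩ := e
    induction e with
    | _ u v =>
      rw [Sym2.map_pair_eq]
      exact (S.mem_edgeSet).mpr ((hA g u v).mpr ((S.mem_edgeSet).mp he))⟩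

/-- The induced action of `g` on the vertices of the subdivision graph of `S`. -/
def smap {V : Type*} {S : SimpleGraph V} {G : Type*} [Group G] [MulAction G V]
    (hA : IsGraphAction S G) (g : G) : V ⊕ S.edgeSet → V ⊕ S.edgeSet :=
  Sum.map (g • ·) (emap hA g)

/-- `p` encodes an `n`-arc of `S` (only values `p 0, …, p n` are relevant). -/
def IsNArc {V : Type*} (S : SimpleGraph V) (n : ℕ) (p : ℕ → V) : Prop :=
  (∀ i < n, S.Adj (p i) (p (i + 1))) ∧ ∀ j, 1 ≤ j → j + 1 ≤ n → p (j - 1) ≠ p (j + 1)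

section helpers

variable {V : Type*} {G : Type*} [Group G] [MulAction G V] {S : SimpleGraph V}

lemma subdiv_not_adj_inl_inl {x y : V} : ¬ (subdiv S).Adj (Sum.inl x) (Sum.inl y) := by
  rintro (⟨_,_,_,h,_⟩|⟨_,_,_,h,_⟩) <;> cases h

lemma subdiv_not_adj_inr_inr {e f : S.edgeSet} : ¬ (subdiv S).Adj (Sum.inr e) (Sum.inr f) := by
  rintro (⟨_,_,h,_,_⟩|⟨_,_,h,_,_⟩) <;> cases h

lemma subdiv_adj_inl_inr {x : V} {e : S.edgeSet} (h : x ∈ (e : Sym2 V)) :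
    (subdiv S).Adj (Sum.inl x) (Sum.inr e) :=
  Or.inl ⟨x, e, rfl, rfl, h⟩

lemma dist_eq_two' {W : Type*} (Γ : SimpleGraph W) {a m b : W}
    (h1 : Γ.Adj a m) (h2 : Γ.Adj m b) (hne : a ≠ b) (hnadj : ¬Γ.Adj a b) :
    Γ.dist a b = 2 := by
  have hle : Γ.dist a b ≤ 2 := by
    simpa using Γ.dist_le (SimpleGraph.Walk.cons h1 (SimpleGraph.Walk.cons h2 SimpleGraph.Walk.nil))
  have hr : Γ.Reachable a b := ⟨.cons h1 (.cons h2 .nil)⟩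
  have h0 : 0 < Γ.dist a b := hr.pos_dist_of_ne hne
  have hone : Γ.dist a b ≠ 1 := fun h => hnadj (dist_eq_one_iff_adj.mp h)
  omega

lemma subdiv_dist_inr_inl {x : V} {e : S.edgeSet} (h : x ∈ (e : Sym2 V)) :
    (subdiv S).dist (Sum.inr e) (Sum.inl x) = 1 :=
  dist_eq_one_iff_adj.mpr (subdiv_adj_inl_inr h).symm

lemma subdiv_dist_inl_inl {v u : V} (h : S.Adj v u) :
    (subdiv S).dist (Sum.inl v) (Sum.inl u) = 2 := by
  refine dist_eq_two' _ (m := Sum.inr ⟨s(v, u), S.mem_edgeSet.mpr h⟩)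
    (subdiv_adj_inl_inr ?_) (subdiv_adj_inl_inr ?_).symm ?_ subdiv_not_adj_inl_inl
  · exact Sym2.mem_iff.mpr (Or.inl rfl)
  · exact Sym2.mem_iff.mpr (Or.inr rfl)
  · exact fun hh => h.ne (Sum.inl.inj hh)

lemma subdiv_dist_inr_inr {e f : S.edgeSet} {x : V} (hx : x ∈ (e : Sym2 V))
    (hy : x ∈ (f : Sym2 V)) (hne : e ≠ f) :
    (subdiv S).dist (Sum.inr e) (Sum.inr f) = 2 :=
  dist_eq_two' _ (m := Sum.inl x) (subdiv_adj_inl_inr hx).symm (subdiv_adj_inl_inr hy)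
    (fun hh => hne (Sum.inr.inj hh)) subdiv_not_adj_inr_inr

variable (hA : IsGraphAction S G)
variable (htr : ∀ (α a b : V ⊕ S.edgeSet) (i : ℕ), 1 ≤ i → i ≤ 2 →
        (subdiv S).dist α a = i → (subdiv S).dist α b = i →
        ∃ g : G, smap hA g α = α ∧ smap hA g a = b)

include htr in
/-- Swap the two endpoints of an edge. -/
lemma sd_swap {x y : V} (h : S.Adj x y) : ∃ g : G, g • x = y ∧ g • y = x := by
  set e : S.edgeSet := ⟨s(x, y), S.mem_edgeSet.mpr h⟩ with he
  obtain ⟨g, hα, hab⟩ := htr (Sum.inr e) (Sum.inl x) (Sum.inl y) 1 le_rfl (by norm_num)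
    (subdiv_dist_inr_inl (Sym2.mem_iff.mpr (Or.inl rfl)))
    (subdiv_dist_inr_inl (Sym2.mem_iff.mpr (Or.inr rfl)))
  have hgx : g • x = y := Sum.inl.inj hab
  have hval : Sym2.map (g • ·) s(x, y) = s(x, y) := congrArg Subtype.val (Sum.inr.inj hα)
  rw [Sym2.map_pair_eq] at hval
  simp only [hgx] at hval
  rcases Sym2.eq_iff.mp hval with ⟨h1, _⟩ | ⟨_, h2⟩
  · exact absurd h1.symm h.ne
  · exact ⟨g, hgx, h2⟩

include htr in
/-- Transitivity on vertices (via connectivity). -/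
lemma sd_vmap (hconn : S.Connected) (u v : V) : ∃ g : G, g • u = v := by
  obtain ⟨w⟩ := hconn.preconnected u v
  induction w with
  | nil => exact ⟨1, one_smul G _⟩
  | cons h _ ih =>
      obtain ⟨g, hg⟩ := ih
      obtain ⟨h0, hh0, _⟩ := sd_swap hA htr h
      exact ⟨g * h0, by rw [mul_smul, hh0, hg]⟩

include htr in
/-- The stabilizer of a vertex is transitive on its neighbours. -/
lemma sd_nbr {v u w : V} (h1 : S.Adj v u) (h2 : S.Adj v w) :
    ∃ g : G, g • v = v ∧ g • u = w := by
  obtain ⟨g, hα, hab⟩ := htr (Sum.inl v) (Sum.inl u) (Sum.inl w) 2 (by norm_num) le_rfl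
    (subdiv_dist_inl_inl h1) (subdiv_dist_inl_inl h2)
  exact ⟨g, Sum.inl.inj hα, Sum.inl.inj hab⟩

include htr in
/-- Arc transitivity. -/
lemma sd_arc (hconn : S.Connected) {a b c d : V} (hab : S.Adj a b) (hcd : S.Adj c d) :
    ∃ g : G, g • a = c ∧ g • b = d := by
  obtain ⟨g1, hg1⟩ := sd_vmap hA htr hconn a c
  have hadj : S.Adj c (g1 • b) := by
    have := (hA g1 a b).mpr hab
    rwa [hg1] at this
  obtain ⟨h0, hv, hn⟩ := sd_nbr hA htr hadj hcd
  exact ⟨h0 * g1, by rw [mul_smul, hg1, hv], by rw [mul_smul, hn]⟩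

include htr in
/-- 2-arc transitivity. -/
lemma sd_two_arc (hconn : S.Connected) {p q : ℕ → V}
    (hp : IsNArc S 2 p) (hq : IsNArc S 2 q) : ∃ g : G, ∀ k ≤ 2, g • p k = q k := by
  have hp01 : S.Adj (p 0) (p 1) := hp.1 0 (by norm_num)
  have hp12 : S.Adj (p 1) (p 2) := hp.1 1 (by norm_num)
  have hp02 : p 0 ≠ p 2 := hp.2 1 le_rfl le_rfl
  have hq01 : S.Adj (q 0) (q 1) := hq.1 0 (by norm_num)
  have hq12 : S.Adj (q 1) (q 2) := hq.1 1 (by norm_num)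
  have hq02 : q 0 ≠ q 2 := hq.2 1 le_rfl le_rfl
  obtain ⟨g, hg0, hg1⟩ := sd_arc hA htr hconn hp01 hq01
  -- gc := g • p 2 is a neighbour of q 1, distinct from q 0
  have hgc : S.Adj (q 1) (g • p 2) := by
    have := (hA g (p 1) (p 2)).mpr hp12
    rwa [hg1] at this
  have hgcne : g • p 2 ≠ q 0 := by
    rw [← hg0]
    exact fun hh => hp02 (MulAction.injective g hh).symm
  set e : S.edgeSet := ⟨s(q 0, q 1), S.mem_edgeSet.mpr hq01⟩ with he
  set f : S.edgeSet := ⟨s(q 1, g • p 2), S.mem_edgeSet.mpr hgc⟩ with hf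
  set f' : S.edgeSet := ⟨s(q 1, q 2), S.mem_edgeSet.mpr hq12⟩ with hf'
  have hef : e ≠ f := by
    intro hh
    have := congrArg Subtype.val hh
    rcases Sym2.eq_iff.mp this with ⟨h1, _⟩ | ⟨h1, _⟩
    · exact hq01.ne h1
    · exact hgcne h1.symm
  have hef' : e ≠ f' := by
    intro hh
    have := congrArg Subtype.val hh
    rcases Sym2.eq_iff.mp this with ⟨h1, _⟩ | ⟨h1, _⟩
    · exact hq01.ne h1
    · exact hq02 h1
  obtain ⟨h0, hα, hab⟩ := htr (Sum.inr e) (Sum.inr f) (Sum.inr f') 2 (by norm_num) le_rfl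
    (subdiv_dist_inr_inr (x := q 1) (Sym2.mem_iff.mpr (Or.inr rfl))
      (Sym2.mem_iff.mpr (Or.inl rfl)) hef)
    (subdiv_dist_inr_inr (x := q 1) (Sym2.mem_iff.mpr (Or.inr rfl))
      (Sym2.mem_iff.mpr (Or.inl rfl)) hef')
  have hvale : Sym2.map (h0 • ·) s(q 0, q 1) = s(q 0, q 1) := congrArg Subtype.val (Sum.inr.inj hα)
  have hvalf : Sym2.map (h0 • ·) s(q 1, g • p 2) = s(q 1, q 2) :=
    congrArg Subtype.val (Sum.inr.inj hab)
  rw [Sym2.map_pair_eq] at hvale hvalf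
  -- h0 • q 1 = q 1
  have hq1fix : h0 • q 1 = q 1 := by
    rcases Sym2.eq_iff.mp hvalf with ⟨h1, _⟩ | ⟨h1, _⟩
    · exact h1
    · exfalso
      rcases Sym2.eq_iff.mp hvale with ⟨_, h2⟩ | ⟨_, h2⟩
      · exact hq12.ne (h2.symm.trans h1)
      · exact hq02 (h2.symm.trans h1)
  have hq0fix : h0 • q 0 = q 0 := by
    rcases Sym2.eq_iff.mp hvale with ⟨h1, _⟩ | ⟨_, h2⟩
    · exact h1
    · exact absurd (hq1fix.symm.trans h2) hq01.ne'
  have hgc2 : h0 • (g • p 2) = q 2 := by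
    rcases Sym2.eq_iff.mp hvalf with ⟨_, h2⟩ | ⟨h1, _⟩
    · exact h2
    · exact absurd (hq1fix.symm.trans h1) hq12.ne
  refine ⟨h0 * g, fun k hk => ?_⟩
  interval_cases k
  · rw [mul_smul, hg0, hq0fix]
  · rw [mul_smul, hg1, hq1fix]
  · rw [mul_smul, hgc2]

end helpers

/-- If `S` is connected with at least one 2-arc and its subdivision graph is locally
`(G,2)`-distance transitive, then `S` is `(G,2)`-arc transitive. -/
theorem stmt_12 {V : Type*} {G : Type*} [Group G] [MulAction G V] (S : SimpleGraph V)
    (hconn : S.Connected) (h2arc : ∃ p : ℕ → V, IsNArc S 2 p) (hA : IsGraphAction S G)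
    (hloc : (∀ (α a b : V ⊕ S.edgeSet) (i : ℕ), 1 ≤ i → i ≤ 2 →
        (subdiv S).dist α a = i → (subdiv S).dist α b = i →
        ∃ g : G, smap hA g α = α ∧ smap hA g a = b) ∧
      ∃ α a : V ⊕ S.edgeSet, (subdiv S).dist α a = 2) :
    (∀ i, 1 ≤ i → i ≤ 2 → ∀ p q : ℕ → V,
      IsNArc S i p → IsNArc S i q → ∃ g : G, ∀ k ≤ i, g • p k = q k) ∧
    ∃ p : ℕ → V, IsNArc S 2 p := by
  obtain ⟨htr, -⟩ := hloc
  refine ⟨fun i hi1 hi2 p q hp hq => ?_, h2arc⟩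
  interval_cases i
  · obtain ⟨g, hg0, hg1⟩ := sd_arc hA htr hconn (hp.1 0 (by norm_num)) (hq.1 0 (by norm_num))
    refine ⟨g, fun k hk => ?_⟩
    interval_cases k
    · exact hg0
    · simpa using hg1
  · exact sd_two_arc hA htr hconn hp hq
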